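/- With g₃(x) = ∫₀¹ min(1 + 𝟙(x ≤ u) + u, 3 − x − u) du, one has ∫₀¹ min(1 + 2x, g₃(x)) dx = 341/144 − (13/48)√13, and this number lies strictly between 1.3915 and 1.3916. -/

import Mathlib

/-!
For fixed `x`, the integrand of `g₃ x` is the minimum of a function increasing in `u` (with a
unit jump at `u = x`) and the decreasing line `3 - x - u`. Splitting at the jump and at the
crossing point shows that `g₃` is piecewise quadratic with breaks at `1/3` and `2/3`. On the
middle piece `g₃ x - (1 + 2x) = 2x² - 5x + 3/2`, whose smaller root `(5 - √13)/4` is the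
threshold below which accepting the first observation is optimal; integrating `1 + 2x` below
the threshold and `g₃` above it gives the value.
-/

open intervalIntegral

/-- Optimal expected rank continuing from step 2 in Robbins' problem with 3 observations,
given first observation `x`. -/
noncomputable def g₃ (x : ℝ) : ℝ :=
  ∫ u in (0:ℝ)..(1:ℝ), min (1 + (if x ≤ u then (1:ℝ) else 0) + u) (3 - x - u)

open MeasureTheory Set

theorem IntervalIntegrable.min {μ : Measure ℝ} {f g : ℝ → ℝ} {a b : ℝ}
    (hf : IntervalIntegrable f μ a b) (hg : IntervalIntegrable g μ a b) :
    IntervalIntegrable (fun u => min (f u) (g u)) μ a b := by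
  rw [intervalIntegrable_iff] at *
  exact hf.inf hg

theorem integral_min_eq_add_of_crossing {f g : ℝ → ℝ} {a b c : ℝ} (hf : Continuous f)
    (hg : Continuous g) (hac : a ≤ c) (hcb : c ≤ b) (hfg : ∀ u ∈ Ioo a c, f u ≤ g u)
    (hgf : ∀ u ∈ Ioo c b, g u ≤ f u) :
    ∫ u in a..b, min (f u) (g u) = (∫ u in a..c, f u) + ∫ u in c..b, g u := by
  have hm : Continuous fun u => min (f u) (g u) := hf.min hg
  rw [← integral_add_adjacent_intervals (hm.intervalIntegrable a c) (hm.intervalIntegrable c b),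
    integral_congr_Ioo_of_le hac fun u hu => min_eq_left (hfg u hu),
    integral_congr_Ioo_of_le hcb fun u hu => min_eq_right (hgf u hu)]

theorem integral_eq_of_eqOn_quadratic {f : ℝ → ℝ} {a b : ℝ} (c₀ c₁ c₂ : ℝ) (hab : a ≤ b)
    (h : EqOn f (fun u => c₀ + c₁ * u + c₂ * u ^ 2) (Icc a b)) :
    ∫ u in a..b, f u = c₀ * (b - a) + c₁ * (b ^ 2 - a ^ 2) / 2 + c₂ * (b ^ 3 - a ^ 3) / 3 := by
  have hderiv : ∀ u, HasDerivAt (fun u => c₀ * u + c₁ * u ^ 2 / 2 + c₂ * u ^ 3 / 3)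
      (c₀ + c₁ * u + c₂ * u ^ 2) u := fun u =>
    (((hasDerivAt_id u).const_mul c₀).add (((hasDerivAt_pow 2 u).const_mul c₁).div_const 2)
      |>.add (((hasDerivAt_pow 3 u).const_mul c₂).div_const 3)).congr_deriv (by simp only [Nat.cast_ofNat, Nat.add_one_sub_one, pow_one]; ring)
  rw [integral_congr (uIcc_of_le hab ▸ h), integral_eq_sub_of_hasDerivAt (fun u _ => hderiv u)
    ((by fun_prop : Continuous fun u : ℝ => c₀ + c₁ * u + c₂ * u ^ 2).intervalIntegrable a b)]
  ring

theorem sqrt_thirteen_bounds : 3.6055 < √13 ∧ √13 < 3.6056 :=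
  ⟨(Real.lt_sqrt (by norm_num)).2 (by norm_num), (Real.sqrt_lt' (by norm_num)).2 (by norm_num)⟩

theorem intervalIntegrable_g₃_integrand (x a b : ℝ) :
    IntervalIntegrable (fun u => min (1 + (if x ≤ u then (1:ℝ) else 0) + u) (3 - x - u))
      volume a b := by
  have hmono : Monotone fun u : ℝ => 1 + (if x ≤ u then (1:ℝ) else 0) + u := fun u v huv => by
    simp only
    split_ifs <;> linarith
  have hanti : Antitone fun u : ℝ => 3 - x - u := fun u v huv => by linarith
  exact hmono.intervalIntegrable.min hanti.intervalIntegrable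

theorem g₃_antitone : Antitone g₃ := fun x y hxy =>
  integral_mono_on zero_le_one (intervalIntegrable_g₃_integrand y 0 1)
    (intervalIntegrable_g₃_integrand x 0 1) fun u _ =>
      min_le_min (by split_ifs <;> linarith) (by linarith)

theorem g₃_eq_add {x : ℝ} (hx₀ : 0 ≤ x) (hx₁ : x ≤ 1) :
    g₃ x = (∫ u in (0:ℝ)..x, min (1 + u) (3 - x - u)) + ∫ u in x..1, min (2 + u) (3 - x - u) := by
  rw [g₃, ← integral_add_adjacent_intervals (intervalIntegrable_g₃_integrand x 0 x)
    (intervalIntegrable_g₃_integrand x x 1)]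
  congr 1
  · refine integral_congr_Ioo_of_le hx₀ fun u hu => ?_
    simp only [if_neg (not_le.2 hu.2), add_zero]
  · refine integral_congr fun u hu => ?_
    rw [uIcc_of_le hx₁] at hu
    simp only [if_pos hu.1]
    norm_num

theorem g₃_of_le_one_third {x : ℝ} (hx₀ : 0 ≤ x) (hx : x ≤ 1/3) :
    g₃ x = 9/4 - 3/2 * x - x ^ 2 / 4 := by
  rw [g₃_eq_add hx₀ (by linarith),
    integral_min_eq_add_of_crossing (c := x) (by fun_prop) (by fun_prop) hx₀ le_rfl
      (fun u hu => by linarith [hu.1, hu.2]) (fun u hu => by linarith [hu.1, hu.2]),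
    integral_min_eq_add_of_crossing (c := (1 - x) / 2) (by fun_prop) (by fun_prop)
      (by linarith) (by linarith) (fun u hu => by linarith [hu.1, hu.2])
      (fun u hu => by linarith [hu.1, hu.2])]
  simp only [integral_comp_add_left (fun u => u), integral_comp_sub_left (fun u => u), integral_id,
    integral_same]
  ring

theorem g₃_of_mem_Icc {x : ℝ} (hx₁ : 1/3 ≤ x) (hx₂ : x ≤ 2/3) :
    g₃ x = 5/2 - 3 * x + 2 * x ^ 2 := by
  rw [g₃_eq_add (by linarith) (by linarith),
    integral_min_eq_add_of_crossing (c := x) (by fun_prop) (by fun_prop) (by linarith) le_rfl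
      (fun u hu => by linarith [hu.1, hu.2]) (fun u hu => by linarith [hu.1, hu.2]),
    integral_min_eq_add_of_crossing (c := x) (by fun_prop) (by fun_prop) le_rfl (by linarith)
      (fun u hu => by linarith [hu.1, hu.2]) (fun u hu => by linarith [hu.1, hu.2])]
  simp only [integral_comp_add_left (fun u => u), integral_comp_sub_left (fun u => u), integral_id,
    integral_same]
  ring

theorem g₃_of_two_thirds_le {x : ℝ} (hx : 2/3 ≤ x) (hx₁ : x ≤ 1) :
    g₃ x = 3/2 - x ^ 2 / 4 := by
  rw [g₃_eq_add (by linarith) hx₁,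
    integral_min_eq_add_of_crossing (c := 1 - x / 2) (by fun_prop) (by fun_prop) (by linarith)
      (by linarith) (fun u hu => by linarith [hu.1, hu.2]) (fun u hu => by linarith [hu.1, hu.2]),
    integral_min_eq_add_of_crossing (c := x) (by fun_prop) (by fun_prop) le_rfl hx₁
      (fun u hu => by linarith [hu.1, hu.2]) (fun u hu => by linarith [hu.1, hu.2])]
  simp only [integral_comp_add_left (fun u => u), integral_comp_sub_left (fun u => u), integral_id,
    integral_same]
  ring

theorem g₃_sub_eq_mul_of_mem_Icc {x : ℝ} (hx₁ : 1/3 ≤ x) (hx₂ : x ≤ 2/3) :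
    g₃ x - (1 + 2 * x) = 2 * (x - (5 - √13) / 4) * (x - (5 + √13) / 4) := by
  rw [g₃_of_mem_Icc hx₁ hx₂]
  linear_combination (1/8 : ℝ) * Real.sq_sqrt (show (0:ℝ) ≤ 13 by norm_num)

theorem one_add_two_mul_le_g₃ {x : ℝ} (hx₀ : 0 ≤ x) (hx : x ≤ (5 - √13) / 4) :
    1 + 2 * x ≤ g₃ x := by
  obtain ⟨hlo, hhi⟩ := sqrt_thirteen_bounds
  rcases le_or_gt x (1/3) with hx₁ | hx₁
  · rw [g₃_of_le_one_third hx₀ hx₁]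
    nlinarith
  · rw [← sub_nonneg, g₃_sub_eq_mul_of_mem_Icc hx₁.le (by linarith)]
    exact mul_nonneg_of_nonpos_of_nonpos (by linarith) (by linarith)

theorem g₃_le_one_add_two_mul {x : ℝ} (hx : (5 - √13) / 4 ≤ x) (hx₁ : x ≤ 1) :
    g₃ x ≤ 1 + 2 * x := by
  obtain ⟨hlo, hhi⟩ := sqrt_thirteen_bounds
  rcases le_or_gt x (2/3) with hx₂ | hx₂
  · rw [← sub_nonpos, g₃_sub_eq_mul_of_mem_Icc (by linarith) hx₂]
    exact mul_nonpos_of_nonneg_of_nonpos (by linarith) (by linarith)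
  · rw [g₃_of_two_thirds_le hx₂.le hx₁]
    nlinarith

theorem robbins_n3_value :
    (∫ x in (0:ℝ)..(1:ℝ), min (1 + 2*x) (g₃ x)) = 341/144 - (13/48) * Real.sqrt 13 ∧
    (1.3915 : ℝ) < 341/144 - (13/48) * Real.sqrt 13 ∧
    341/144 - (13/48) * Real.sqrt 13 < (1.3916 : ℝ) := by
  obtain ⟨hlo, hhi⟩ := sqrt_thirteen_bounds
  set t := (5 - √13) / 4 with ht
  have hF (a b : ℝ) : IntervalIntegrable (fun x => min (1 + 2 * x) (g₃ x)) volume a b :=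
    ((by fun_prop : Continuous fun x : ℝ => 1 + 2 * x).intervalIntegrable a b).min
      g₃_antitone.intervalIntegrable
  rw [← integral_add_adjacent_intervals (hF 0 t) (hF t 1),
    ← integral_add_adjacent_intervals (hF t (2/3)) (hF (2/3) 1),
    integral_eq_of_eqOn_quadratic 1 2 0 (by linarith) fun x hx => by
      rw [min_eq_left (one_add_two_mul_le_g₃ hx.1 hx.2)]; ring,
    integral_eq_of_eqOn_quadratic (5/2) (-3) 2 (by linarith) fun x hx => by
      rw [min_eq_right (g₃_le_one_add_two_mul hx.1 (by linarith [hx.2])),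
        g₃_of_mem_Icc (by linarith [hx.1]) hx.2]; ring,
    integral_eq_of_eqOn_quadratic (3/2) 0 (-1/4) (by norm_num) fun x hx => by
      rw [min_eq_right (g₃_le_one_add_two_mul (by linarith [hx.1]) hx.2),
        g₃_of_two_thirds_le hx.1 hx.2]; ring]
  refine ⟨?_, by linarith, by linarith⟩
  linear_combination (√13 / 96) * Real.sq_sqrt (show (0:ℝ) ≤ 13 by norm_num)
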